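/- Let m ≥ 1 and 1 ≤ k ≤ m. Suppose γ : 𝔭 → W_k is an ℝ-linear map satisfying ρ_m(ξ_u^-)γ(ξ_v) = ρ_m(ξ_v^-)γ(ξ_u) for all u, v ∈ ℂⁿ. Then γ is conjugate-ℂ-linear: γ(ξ_{iv}) = −i·γ(ξ_v) for all v ∈ ℂⁿ. -/

import Mathlib

/-! The defect `δ = γ(iv) + i γ(v)` is killed by every lowering operator `ρ(ξ_u⁻)`: by the
symmetry, `ρ(ξ_u⁻) γ(iv) = ρ(ξ_{iv}⁻) γ(u)`, and `ξ_v⁻` is conjugate-linear in `v`. As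
`ρ(ξ_{e_a}⁻) = x_{n+1} ∂_a`, all derivatives of `δ` in the variables of `V_1` vanish. But `W_k` is
homogeneous of degree `k` in those variables, so by Euler's identity `Σ_a x_a ∂_a` acts on it as
multiplication by `k ≠ 0`, whence `δ = 0`. -/

open MvPolynomial

noncomputable section

/-- The matrix `ξ_v⁺ = [[0, v],[0, 0]]` in block form. -/
def xiP (n : ℕ) (v : Fin n → ℂ) : Matrix (Fin (n+1)) (Fin (n+1)) ℂ :=
  Matrix.of fun i j => if h : (i : ℕ) < n ∧ j = Fin.last n then v ⟨i, h.1⟩ else 0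

/-- The matrix `ξ_v⁻ = [[0, 0],[v*, 0]]` in block form. -/
def xiM (n : ℕ) (v : Fin n → ℂ) : Matrix (Fin (n+1)) (Fin (n+1)) ℂ :=
  Matrix.of fun i j =>
    if h : i = Fin.last n ∧ (j : ℕ) < n then (starRingEnd ℂ) (v ⟨j, h.2⟩) else 0

/-- The matrix `ξ_v = [[0, v],[v*, 0]]` in block form. -/
def xi (n : ℕ) (v : Fin n → ℂ) : Matrix (Fin (n+1)) (Fin (n+1)) ℂ := xiP n v + xiM n v

/-- The derived representation of `gl(n+1, ℂ)` on `W = S^m(ℂ^{n+1})`, realized on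
the polynomial ring `ℂ[x_1, …, x_{n+1}]` (a vector `v` corresponds to the linear
form `Σ v_i x_i` and the symmetric product to the product of polynomials, so that
`(u+w)^j = Σ binom(j,i) u^i w^{j-i}`); it acts by derivations. -/
def rho (n : ℕ) (M : Matrix (Fin (n+1)) (Fin (n+1)) ℂ) :
    MvPolynomial (Fin (n+1)) ℂ →ₗ[ℂ] MvPolynomial (Fin (n+1)) ℂ :=
  ∑ i, ∑ j, M j i • ((LinearMap.mulLeft ℂ (X j)) ∘ₗ (pderiv i).toLinearMap)

/-- The component `W_k = S^k(V_1)·e_{n+1}^{m-k}` of `W = S^m(ℂ^{n+1})`: the span of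
monomials of total degree `m` with degree `m - k` in the last variable. -/
def Wcomp (n m k : ℕ) : Submodule ℂ (MvPolynomial (Fin (n+1)) ℂ) :=
  Submodule.span ℂ {p | ∃ d : Fin (n+1) →₀ ℕ,
    (∑ i, d i) = m ∧ d (Fin.last n) = m - k ∧ p = monomial d 1}

lemma rho_smul (n : ℕ) (c : ℂ) (M : Matrix (Fin (n+1)) (Fin (n+1)) ℂ) :
    rho n (c • M) = c • rho n M := by
  simp [rho, Finset.smul_sum, smul_smul]

lemma rho_single_apply (n : ℕ) (i j : Fin (n+1)) (c : ℂ) (p : MvPolynomial (Fin (n+1)) ℂ) :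
    rho n (Matrix.single i j c) p = c • (X i * pderiv j p) := by
  simp [rho, Matrix.single_apply, ite_and]

lemma xiM_smul (n : ℕ) (c : ℂ) (v : Fin n → ℂ) :
    xiM n (c • v) = star c • xiM n v := by
  ext i j
  simp only [xiM, Matrix.of_apply, Matrix.smul_apply, Pi.smul_apply, smul_eq_mul]
  split_ifs <;> simp

lemma xiM_single (n : ℕ) (a : Fin n) (c : ℂ) :
    xiM n (Pi.single a c) = Matrix.single (Fin.last n) a.castSucc (star c) := by
  ext i j
  by_cases hi : i = Fin.last n
  · subst hi
    cases j using Fin.lastCases with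
    | last => simp [xiM]
    | cast b =>
      rcases eq_or_ne a b with rfl | hab
      · simp [xiM]
      · simp [xiM, hab, hab.symm]
  · simp [xiM, hi, Ne.symm hi]

lemma rho_xiM_smul (n : ℕ) (c : ℂ) (v : Fin n → ℂ) :
    rho n (xiM n (c • v)) = star c • rho n (xiM n v) := by
  rw [xiM_smul, rho_smul]

lemma Wcomp_le_weightedHomogeneousSubmodule {n m k : ℕ} (hkm : k ≤ m) :
    Wcomp n m k ≤
      weightedHomogeneousSubmodule ℂ (fun i : Fin (n+1) => if i = Fin.last n then 0 else 1) k := by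
  refine Submodule.span_le.mpr ?_
  rintro _ ⟨d, hd, hlast, rfl⟩
  refine isWeightedHomogeneous_monomial _ _ _ ?_
  rw [Finsupp.weight_apply, Finsupp.sum_fintype _ _ (by simp)]
  rw [Fin.sum_univ_castSucc] at hd ⊢
  simp only [Fin.castSucc_ne_last, ↓reduceIte, smul_eq_mul, mul_one]
  omega

lemma eq_zero_of_mem_Wcomp_of_pderiv_castSucc_eq_zero {n m k : ℕ} (hk : k ≠ 0) (hkm : k ≤ m)
    {p : MvPolynomial (Fin (n+1)) ℂ} (hp : p ∈ Wcomp n m k)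
    (h : ∀ a : Fin n, pderiv a.castSucc p = 0) : p = 0 := by
  have euler := (Wcomp_le_weightedHomogeneousSubmodule hkm hp).sum_weight_X_mul_pderiv
  simpa [Fin.sum_univ_castSucc, h, hk] using euler

lemma eq_zero_of_mem_Wcomp_of_rho_xiM_eq_zero {n m k : ℕ} (hk : k ≠ 0) (hkm : k ≤ m)
    {p : MvPolynomial (Fin (n+1)) ℂ} (hp : p ∈ Wcomp n m k)
    (h : ∀ u, rho n (xiM n u) p = 0) : p = 0 :=
  eq_zero_of_mem_Wcomp_of_pderiv_castSucc_eq_zero hk hkm hp fun a => by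
    simpa [xiM_single, rho_single_apply, X_ne_zero] using h (Pi.single a 1)

theorem minus_symmetry_implies_conjugate_linear_general (n m k : ℕ)
    (hk : 1 ≤ k) (hkm : k ≤ m)
    (γ : (Fin n → ℂ) → MvPolynomial (Fin (n+1)) ℂ)
    (hWk : ∀ v, γ v ∈ Wcomp n m k)
    (hsym : ∀ u v, rho n (xiM n u) (γ v) = rho n (xiM n v) (γ u)) :
    ∀ v, γ (Complex.I • v) = (-Complex.I) • γ v := by
  intro v
  have defect_lowered : ∀ u, rho n (xiM n u) (γ (Complex.I • v) + Complex.I • γ v) = 0 := by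
    intro u
    rw [map_add, map_smul, hsym u, rho_xiM_smul, LinearMap.smul_apply, hsym v u,
      Complex.star_def, Complex.conj_I, neg_smul, neg_add_cancel]
  have defect_eq_zero := eq_zero_of_mem_Wcomp_of_rho_xiM_eq_zero (by omega) hkm
    ((Wcomp n m k).add_mem (hWk _) ((Wcomp n m k).smul_mem _ (hWk v))) defect_lowered
  rw [eq_neg_of_add_eq_zero_left defect_eq_zero, neg_smul]

/-- If `γ : 𝔭 → W_k` (with `1 ≤ k ≤ m`) is ℝ-linear and satisfies
`ρ_m(ξ_u⁻)γ(ξ_v) = ρ_m(ξ_v⁻)γ(ξ_u)` for all `u, v`, then `γ` is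
conjugate-ℂ-linear. -/
theorem minus_symmetry_implies_conjugate_linear (n m k : ℕ)
    (hm : 1 ≤ m) (hk : 1 ≤ k) (hkm : k ≤ m)
    (γ : (Fin n → ℂ) → MvPolynomial (Fin (n+1)) ℂ)
    (hadd : ∀ u v, γ (u + v) = γ u + γ v)
    (hsmul : ∀ (r : ℝ) (v : Fin n → ℂ), γ ((r : ℂ) • v) = (r : ℂ) • γ v)
    (hWk : ∀ v, γ v ∈ Wcomp n m k)
    (hsym : ∀ u v, rho n (xiM n u) (γ v) = rho n (xiM n v) (γ u)) :
    ∀ v, γ (Complex.I • v) = (-Complex.I) • γ v :=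
  minus_symmetry_implies_conjugate_linear_general n m k hk hkm γ hWk hsym

end
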